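/- arXiv:1210.6193 — 2 statements merged into one kernel-verified Lean document; each statement's English description precedes it below -/
import Mathlib

section
/- Let (ξ_i)_{i≥1} be i.i.d. non-negative random variables with P(ξ_1 ≤ t) ≤ 1/2 + t/(εh) for all t > 0, and S_n = Σξ_i. Then there exist constants c₂ > 0 (small) and c₃ > 0 such that P(S_n ≤ c₂ n h) ≤ e^{-c₃ n} for all n ∈ ℕ. -/
open MeasureTheory ProbabilityTheory Real Finset

/-!
Chernoff bound with a negative exponent `t`. Splitting `exp (t ξ)` at level `s` gives
`E exp (t ξ) ≤ P(ξ ≤ s) + exp (t s)`. At `s = ε h / 8` the tail hypothesis gives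
`P(ξ ≤ s) ≤ 5/8`, and `t = -log 8 / s` makes `exp (t s) = 1/8`, so `E exp (t ξ) ≤ 3/4`.
By independence `P(S_n ≤ a n) ≤ (exp (-t a) · 3/4)^n`, and `a = c₂ h` is chosen so that
`exp (-t a) = 9/8`, giving the rate `27/32 < 1`.
-/

namespace ProbabilityTheory

variable {Ω : Type*} [MeasurableSpace Ω] {μ : Measure Ω} {X : Ω → ℝ} {t : ℝ}

lemma integrable_exp_mul_of_nonneg_of_nonpos [IsFiniteMeasure μ] (hX : Measurable X)
    (hX0 : ∀ ω, 0 ≤ X ω) (ht : t ≤ 0) : Integrable (fun ω ↦ exp (t * X ω)) μ :=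
  .of_mem_Icc 0 1 (by fun_prop) <| ae_of_all _ fun ω ↦
    ⟨(exp_pos _).le, exp_le_one_iff.mpr (mul_nonpos_of_nonpos_of_nonneg ht (hX0 ω))⟩

lemma mgf_le_measureReal_le_add_exp [IsProbabilityMeasure μ] (hX : Measurable X)
    (hX0 : ∀ ω, 0 ≤ X ω) (ht : t ≤ 0) (s : ℝ) :
    mgf X μ t ≤ μ.real {ω | X ω ≤ s} + exp (t * s) := by
  have hs : MeasurableSet {ω | X ω ≤ s} := measurableSet_le hX measurable_const
  have hpointwise : ∀ ω, exp (t * X ω) ≤ {ω | X ω ≤ s}.indicator 1 ω + exp (t * s) := by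
    intro ω
    by_cases hω : X ω ≤ s
    · have : exp (t * X ω) ≤ 1 :=
        exp_le_one_iff.mpr (mul_nonpos_of_nonpos_of_nonneg ht (hX0 ω))
      rw [Set.indicator_of_mem (show ω ∈ {ω | X ω ≤ s} from hω), Pi.one_apply]
      linarith [exp_pos (t * s)]
    · rw [Set.indicator_of_notMem (show ω ∉ {ω | X ω ≤ s} from hω), zero_add]
      exact exp_le_exp.mpr (mul_le_mul_of_nonpos_left (not_le.mp hω).le ht)
  have hint : Integrable (fun ω ↦ {ω | X ω ≤ s}.indicator (1 : Ω → ℝ) ω) μ :=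
    (integrable_const 1).indicator hs
  calc mgf X μ t ≤ ∫ ω, ({ω | X ω ≤ s}.indicator 1 ω + exp (t * s)) ∂μ :=
        integral_mono (integrable_exp_mul_of_nonneg_of_nonpos hX hX0 ht)
          (hint.add (integrable_const _)) hpointwise
    _ = μ.real {ω | X ω ≤ s} + exp (t * s) := by
        rw [integral_add hint (integrable_const _), integral_indicator_one hs, integral_const,
          probReal_univ, one_smul]

lemma iIndepFun.measureReal_sum_range_le_le_exp_mul_mgf_pow [IsProbabilityMeasure μ]
    {ξ : ℕ → Ω → ℝ} (hindep : iIndepFun ξ μ) (hξm : ∀ i, Measurable (ξ i))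
    (hξ0 : ∀ i ω, 0 ≤ ξ i ω) (hident : ∀ i, IdentDistrib (ξ i) (ξ 0) μ μ) (ht : t ≤ 0)
    (a : ℝ) (n : ℕ) :
    μ.real {ω | ∑ i ∈ range n, ξ i ω ≤ a * n} ≤ (exp (-t * a) * mgf (ξ 0) μ t) ^ n := by
  set S := ∑ i ∈ range n, ξ i
  have hS : Measurable S := by
    simpa only [S, ← Finset.sum_apply] using Finset.measurable_sum (range n) fun i _ ↦ hξm i
  have hS0 : ∀ ω, 0 ≤ S ω := fun ω ↦ by
    simpa only [S, Finset.sum_apply] using sum_nonneg fun i _ ↦ hξ0 i ω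
  have hmgf : mgf S μ t = mgf (ξ 0) μ t ^ n := by
    rw [hindep.mgf_sum hξm, prod_eq_pow_card fun i _ ↦
      mgf_congr_of_identDistrib _ _ (hident i) t, card_range]
  calc μ.real {ω | ∑ i ∈ range n, ξ i ω ≤ a * n} = μ.real {ω | S ω ≤ a * n} := by
        simp only [S, Finset.sum_apply]
    _ ≤ exp (-t * (a * n)) * mgf S μ t :=
        measure_le_le_exp_mul_mgf _ ht (integrable_exp_mul_of_nonneg_of_nonpos hS hS0 ht)
    _ = (exp (-t * a) * mgf (ξ 0) μ t) ^ n := by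
        rw [hmgf, mul_pow, ← exp_nat_mul, mul_comm (n : ℝ), mul_assoc]

end ProbabilityTheory

/-- Exponential lower-tail bound: `P(S_n ≤ c₂ n h) ≤ e^{-c₃ n}`. -/
theorem stmt_13 {Ω : Type*} [MeasurableSpace Ω] (μ : Measure Ω) [IsProbabilityMeasure μ]
    (ξ : ℕ → Ω → ℝ) (hξm : ∀ i, Measurable (ξ i)) (hξ0 : ∀ i ω, 0 ≤ ξ i ω)
    (hindep : iIndepFun ξ μ)
    (hident : ∀ i, IdentDistrib (ξ i) (ξ 0) μ μ)
    (ε h : ℝ) (hε : 0 < ε) (hh : 0 < h)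
    (htail : ∀ t > (0:ℝ), (μ {ω | ξ 0 ω ≤ t}).toReal ≤ 1 / 2 + t / (ε * h)) :
    ∃ c₂ > (0:ℝ), ∃ c₃ > (0:ℝ), ∀ n : ℕ,
      (μ {ω | ∑ i ∈ Finset.range n, ξ i ω ≤ c₂ * n * h}).toReal ≤ Real.exp (-c₃ * n) := by
  set s := ε * h / 8
  have hs : 0 < s := by positivity
  have hlog8 : 0 < log 8 := log_pos (by norm_num)
  set t := -log 8 / s
  have ht : t ≤ 0 := div_nonpos_of_nonpos_of_nonneg (neg_nonpos.mpr hlog8.le) hs.le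
  have hmgf : mgf (ξ 0) μ t ≤ 3 / 4 := by
    have hexp : exp (t * s) = 1 / 8 := by
      rw [div_mul_cancel₀ _ hs.ne', exp_neg, exp_log (by norm_num)]
      norm_num
    have hsmall : μ.real {ω | ξ 0 ω ≤ s} ≤ 1 / 2 + 1 / 8 := by
      have hratio : s / (ε * h) = 1 / 8 := by simp only [s]; field_simp
      exact (htail s hs).trans_eq (by rw [hratio])
    linarith [mgf_le_measureReal_le_add_exp (μ := μ) (hξm 0) (hξ0 0) ht s]
  set c₂ := ε * log (9 / 8) / (8 * log 8)
  have hrate : exp (-t * (c₂ * h)) = 9 / 8 := by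
    rw [show -t * (c₂ * h) = log (9 / 8) by simp only [t, s, c₂]; field_simp,
      exp_log (by norm_num)]
  refine ⟨c₂, by positivity, -log (27 / 32), neg_pos.mpr (log_neg (by norm_num) (by norm_num)),
    fun n ↦ ?_⟩
  calc (μ {ω | ∑ i ∈ range n, ξ i ω ≤ c₂ * n * h}).toReal
      = μ.real {ω | ∑ i ∈ range n, ξ i ω ≤ c₂ * h * n} := by rw [mul_right_comm]; rfl
    _ ≤ (exp (-t * (c₂ * h)) * mgf (ξ 0) μ t) ^ n :=
        hindep.measureReal_sum_range_le_le_exp_mul_mgf_pow hξm hξ0 hident ht _ n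
    _ ≤ (27 / 32) ^ n := by
        rw [hrate]
        gcongr
        · exact mul_nonneg (by norm_num) mgf_nonneg
        · linarith
    _ = exp (-(-log (27 / 32)) * n) := by
        rw [neg_neg, mul_comm, exp_nat_mul, exp_log (by norm_num)]
end

section
/- Let N ∈ ℕ, p, q ∈ [0,1], λ > 0, and let M be a random variable such that conditionally on a random variable W, M - 1 is binomial with parameters W - 1 and p, where W is a positive-integer random variable. Then P(M ≥ λ) ≤ P(pW ≥ λ/2) + P(Bin(⌈λ/(2p)⌉, p) ≥ λ - 1). -/
open MeasureTheory Finset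

/-- Probability that a binomial with parameters `N`, `p` lies in `{k : x ≤ k}`. -/
noncomputable def binomPMF (N : ℕ) (p : ℝ) (k : ℕ) : ℝ :=
  (N.choose k : ℝ) * p ^ k * (1 - p) ^ (N - k)

noncomputable def binomTail (N : ℕ) (p : ℝ) (x : ℝ) : ℝ :=
  ∑ k ∈ Finset.range (N + 1), if x ≤ (k : ℝ) then binomPMF N p k else 0

/-!
Split `{M ≥ λ}` according to whether `pW ≥ λ/2`. On the complement `W ≤ ⌈λ/(2p)⌉`, and on each
fibre `{W = w}` the conditional law of `M - 1` is `Bin(w - 1, p)`, whose tail is at most that of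
`Bin(⌈λ/(2p)⌉, p)`: by Pascal's rule `Bin(n + 1, p)` is a mixture of `Bin(n, p)` and `1 + Bin(n, p)`,
so binomial tails grow with the number of trials. Summing over the fibres gives the second term.
-/
section Binomial

variable {p : ℝ}

lemma binomPMF_nonneg (hp0 : 0 ≤ p) (hp1 : p ≤ 1) (n k : ℕ) : 0 ≤ binomPMF n p k := by
  have : 0 ≤ 1 - p := by linarith
  unfold binomPMF
  positivity

lemma binomPMF_of_lt {n k : ℕ} (h : n < k) : binomPMF n p k = 0 := by
  simp [binomPMF, Nat.choose_eq_zero_of_lt h]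

lemma binomPMF_succ_zero (n : ℕ) : binomPMF (n + 1) p 0 = (1 - p) * binomPMF n p 0 := by
  simp [binomPMF, pow_succ]
  ring

lemma binomPMF_succ_succ (n k : ℕ) :
    binomPMF (n + 1) p (k + 1) = p * binomPMF n p k + (1 - p) * binomPMF n p (k + 1) := by
  rcases lt_trichotomy k n with hk | rfl | hk
  · obtain ⟨d, rfl⟩ := Nat.exists_eq_add_of_lt hk
    simp only [binomPMF, Nat.choose_succ_succ, Nat.cast_add,
      show k + d + 1 + 1 - (k + 1) = d + 1 by omega, show k + d + 1 - k = d + 1 by omega,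
      show k + d + 1 - (k + 1) = d by omega]
    ring
  · simp [binomPMF, pow_succ, mul_comm]
  · simp [binomPMF_of_lt hk, binomPMF_of_lt (Nat.lt_succ_of_lt hk),
      binomPMF_of_lt (Nat.succ_lt_succ hk)]

lemma binomTail_nonneg (hp0 : 0 ≤ p) (hp1 : p ≤ 1) (n : ℕ) (x : ℝ) : 0 ≤ binomTail n p x :=
  sum_nonneg fun k _ => by split_ifs <;> simp [binomPMF_nonneg hp0 hp1]

lemma binomTail_anti (hp0 : 0 ≤ p) (hp1 : p ≤ 1) (n : ℕ) {x y : ℝ} (hxy : x ≤ y) :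
    binomTail n p y ≤ binomTail n p x :=
  sum_le_sum fun k _ => by
    split_ifs with hy hx
    · rfl
    · exact absurd (hxy.trans hy) hx
    · exact binomPMF_nonneg hp0 hp1 n k
    · rfl

lemma binomTail_succ (n : ℕ) (x : ℝ) :
    binomTail (n + 1) p x = p * binomTail n p (x - 1) + (1 - p) * binomTail n p x := by
  have hshift : binomTail n p x = ∑ j ∈ range (n + 1),
      (if x ≤ ((j + 1 : ℕ) : ℝ) then binomPMF n p (j + 1) else 0) +
      if x ≤ ((0 : ℕ) : ℝ) then binomPMF n p 0 else 0 := by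
    rw [← sum_range_succ' (fun k => if x ≤ (k : ℝ) then binomPMF n p k else 0),
      sum_range_succ, binomPMF_of_lt (Nat.lt_succ_self n)]
    simp [binomTail]
  rw [hshift, binomTail, sum_range_succ', binomTail, binomPMF_succ_zero, mul_add, mul_sum,
    mul_sum, ← add_assoc, ← sum_add_distrib]
  congr 1
  · refine sum_congr rfl fun j _ => ?_
    rw [binomPMF_succ_succ]
    push_cast
    split_ifs <;> first | ring1 | (exfalso; linarith)
  · split_ifs <;> ring

lemma binomTail_monotone (hp0 : 0 ≤ p) (hp1 : p ≤ 1) (x : ℝ) :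
    Monotone fun n => binomTail n p x :=
  monotone_nat_of_le_succ fun n => by
    have := binomTail_anti hp0 hp1 n (sub_le_self x zero_le_one)
    rw [binomTail_succ]
    nlinarith [binomTail_nonneg hp0 hp1 n x]

end Binomial

section Measure

variable {Ω : Type*} [MeasurableSpace Ω] {μ : Measure Ω}

lemma measureReal_inter_le_sum_of_null [IsFiniteMeasure μ] {A : Set Ω} {M : Ω → ℕ} {m : ℕ}
    (P : ℕ → Prop) [DecidablePred P]
    (hnull : ∀ k, m < k → μ.real (A ∩ {ω | M ω = k}) = 0) :
    μ.real (A ∩ {ω | P (M ω)})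
      ≤ ∑ k ∈ range (m + 1), if P k then μ.real (A ∩ {ω | M ω = k}) else 0 := by
  -- `M` need not be measurable, so the part `m < M` is handled as a countable union of null sets.
  have htail : μ.real (⋃ k, A ∩ {ω | M ω = m + 1 + k}) = 0 :=
    (measureReal_eq_zero_iff (measure_ne_top μ _)).2 <| measure_iUnion_null fun k =>
      (measureReal_eq_zero_iff (measure_ne_top μ _)).1 (hnull _ (by omega))
  calc μ.real (A ∩ {ω | P (M ω)})
      ≤ μ.real ((⋃ k ∈ (range (m + 1)).filter P, A ∩ {ω | M ω = k})
          ∪ ⋃ k, A ∩ {ω | M ω = m + 1 + k}) := by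
        refine measureReal_mono (fun ω ⟨hA, hP⟩ => ?_) (measure_ne_top μ _)
        by_cases hM : M ω ≤ m
        · exact Or.inl (Set.mem_biUnion (mem_filter.2 ⟨mem_range_succ_iff.2 hM, hP⟩) ⟨hA, rfl⟩)
        · exact Or.inr (Set.mem_iUnion.2
            ⟨M ω - (m + 1), hA, (by omega : M ω = m + 1 + (M ω - (m + 1)))⟩)
    _ ≤ μ.real (⋃ k ∈ (range (m + 1)).filter P, A ∩ {ω | M ω = k}) :=
        (measureReal_union_le _ _).trans_eq (by rw [htail, add_zero])
    _ ≤ _ := by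
        rw [← sum_filter]
        exact measureReal_biUnion_finset_le _ _

lemma measureReal_inter_le_mul_binomTail [IsFiniteMeasure μ] {A : Set Ω} {M : Ω → ℕ} {n : ℕ}
    {p : ℝ} (hM : ∀ k, μ.real (A ∩ {ω | M ω = k})
      = μ.real A * (if 1 ≤ k then binomPMF n p (k - 1) else 0)) (x : ℝ) :
    μ.real (A ∩ {ω | x ≤ (M ω : ℝ)}) ≤ μ.real A * binomTail n p (x - 1) := by
  have hnull : ∀ k, n + 1 < k → μ.real (A ∩ {ω | M ω = k}) = 0 := fun k hk => by
    rw [hM, if_pos (by omega), binomPMF_of_lt (by omega), mul_zero]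
  refine (measureReal_inter_le_sum_of_null (fun k : ℕ => x ≤ (k : ℝ)) hnull).trans_eq ?_
  rw [sum_range_succ', binomTail, mul_sum]
  simp only [hM]
  simp

lemma measureReal_inter_fiber_le [IsProbabilityMeasure μ] {W : Ω → ℕ} (hW : Measurable W)
    {E : Set Ω} {N : ℕ} {T : ℝ} (hT : 0 ≤ T)
    (hE : ∀ w ≤ N, μ.real (W ⁻¹' {w} ∩ E) ≤ μ.real (W ⁻¹' {w}) * T) :
    μ.real ({ω | W ω ≤ N} ∩ E) ≤ T :=
  calc μ.real ({ω | W ω ≤ N} ∩ E) ≤ μ.real (⋃ w ∈ range (N + 1), W ⁻¹' {w} ∩ E) :=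
        measureReal_mono (fun ω ⟨hN, hω⟩ =>
          Set.mem_biUnion (mem_range_succ_iff.2 hN) ⟨rfl, hω⟩) (measure_ne_top μ _)
    _ ≤ ∑ w ∈ range (N + 1), μ.real (W ⁻¹' {w}) * T :=
        (measureReal_biUnion_finset_le _ _).trans
          (sum_le_sum fun w hw => hE w (mem_range_succ_iff.1 hw))
    _ = μ.real (W ⁻¹' ↑(range (N + 1))) * T := by
        rw [← sum_mul,
          sum_measureReal_preimage_singleton _ fun w _ => hW (measurableSet_singleton w)]
    _ ≤ T := mul_le_of_le_one_left hT measureReal_le_one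

end Measure

theorem stmt_14_general {Ω : Type*} [MeasurableSpace Ω] (μ : Measure Ω) [IsProbabilityMeasure μ]
    (W M : Ω → ℕ) (hWm : Measurable W)
    (p lam : ℝ) (hp : p ∈ Set.Ioc (0:ℝ) 1)
    (hMW : ∀ w k : ℕ, (μ {ω | W ω = w ∧ M ω = k}).toReal
        = (μ {ω | W ω = w}).toReal * (if 1 ≤ k then binomPMF (w - 1) p (k - 1) else 0)) :
    (μ {ω | lam ≤ (M ω : ℝ)}).toReal
      ≤ (μ {ω | lam / 2 ≤ p * (W ω : ℝ)}).toReal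
        + binomTail ⌈lam / (2 * p)⌉₊ p (lam - 1) := by
  obtain ⟨hp0, hp1⟩ := hp
  set N := ⌈lam / (2 * p)⌉₊
  have hsplit : {ω | lam ≤ (M ω : ℝ)}
      ⊆ {ω | lam / 2 ≤ p * (W ω : ℝ)} ∪ ({ω | W ω ≤ N} ∩ {ω | lam ≤ (M ω : ℝ)}) := by
    intro ω hω
    by_cases h : lam / 2 ≤ p * (W ω : ℝ)
    · exact Or.inl h
    · have hW : (W ω : ℝ) < lam / (2 * p) := by
        rw [lt_div_iff₀ (by positivity)]
        linarith
      exact Or.inr ⟨Nat.cast_le.1 (hW.le.trans (Nat.le_ceil _)), hω⟩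
  have hsmall : μ.real ({ω | W ω ≤ N} ∩ {ω | lam ≤ (M ω : ℝ)}) ≤ binomTail N p (lam - 1) := by
    refine measureReal_inter_fiber_le hWm (binomTail_nonneg hp0.le hp1 _ _) fun w hw => ?_
    calc μ.real (W ⁻¹' {w} ∩ {ω | lam ≤ (M ω : ℝ)})
        ≤ μ.real (W ⁻¹' {w}) * binomTail (w - 1) p (lam - 1) :=
          measureReal_inter_le_mul_binomTail (hMW w) lam
      _ ≤ μ.real (W ⁻¹' {w}) * binomTail N p (lam - 1) := by
          gcongr
          exact binomTail_monotone hp0.le hp1 _ (by omega)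
  calc μ.real {ω | lam ≤ (M ω : ℝ)}
      ≤ μ.real {ω | lam / 2 ≤ p * (W ω : ℝ)}
        + μ.real ({ω | W ω ≤ N} ∩ {ω | lam ≤ (M ω : ℝ)}) :=
        (measureReal_mono hsplit (measure_ne_top μ _)).trans (measureReal_union_le _ _)
    _ ≤ _ := add_le_add_right hsmall _

/-- If, conditionally on `W`, `M - 1` is binomial with parameters `W - 1` and `p`, then
`P(M ≥ λ) ≤ P(pW ≥ λ/2) + P(Bin(⌈λ/(2p)⌉, p) ≥ λ - 1)`. -/
theorem stmt_14 {Ω : Type*} [MeasurableSpace Ω] (μ : Measure Ω) [IsProbabilityMeasure μ]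
    (W M : Ω → ℕ) (hWm : Measurable W) (hMm : Measurable M) (hW1 : ∀ ω, 1 ≤ W ω)
    (p lam : ℝ) (hp : p ∈ Set.Ioc (0:ℝ) 1) (hlam : 0 < lam)
    (hMW : ∀ w k : ℕ, (μ {ω | W ω = w ∧ M ω = k}).toReal
        = (μ {ω | W ω = w}).toReal * (if 1 ≤ k then binomPMF (w - 1) p (k - 1) else 0)) :
    (μ {ω | lam ≤ (M ω : ℝ)}).toReal
      ≤ (μ {ω | lam / 2 ≤ p * (W ω : ℝ)}).toReal
        + binomTail ⌈lam / (2 * p)⌉₊ p (lam - 1) :=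
  stmt_14_general μ W M hWm p lam hp hMW
end
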